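/- arXiv:1806.09366 — 2 statements merged into one kernel-verified Lean document; each statement's English description precedes it below -/
import Mathlib

section
/- Let X and Y be real Banach spaces, let Y₂ be a real Banach space and N an absolute norm, and let Y be (isometrically) the absolute sum Y₁ ⊕_a Y₂ of a Banach space Y₁ and Y₂ (so Y₁ is an absolute summand of Y). If the pair (X, Y₁ ⊕_a Y₂) has the Bishop–Phelps–Bollobás property, then the pair (X, Y₁) has the Bishop–Phelps–Bollobás property. -/
open Filter Topology

/-- `N` is an absolute norm on `ℝ²`: a norm with `N(1,0)=N(0,1)=1` and
`N(s,t)=N(|s|,|t|)`. -/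
structure IsAbsoluteNorm (N : ℝ → ℝ → ℝ) : Prop where
  nonneg : ∀ s t : ℝ, 0 ≤ N s t
  eq_zero_iff : ∀ s t : ℝ, N s t = 0 ↔ s = 0 ∧ t = 0
  triangle : ∀ s₁ t₁ s₂ t₂ : ℝ, N (s₁ + s₂) (t₁ + t₂) ≤ N s₁ t₁ + N s₂ t₂
  smul : ∀ c s t : ℝ, N (c * s) (c * t) = |c| * N s t
  one_zero : N 1 0 = 1
  zero_one : N 0 1 = 1
  abs_eq : ∀ s t : ℝ, N s t = N |s| |t|

/-- The pair `(X, Y)` has the Bishop–Phelps–Bollobás property. -/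
def HasBPBp (X Y : Type*) [NormedAddCommGroup X] [NormedSpace ℝ X]
    [NormedAddCommGroup Y] [NormedSpace ℝ Y] : Prop :=
  ∀ ε : ℝ, 0 < ε → ∃ η : ℝ, 0 < η ∧
    ∀ (T : X →L[ℝ] Y) (x₀ : X), ‖T‖ = 1 → ‖x₀‖ = 1 → 1 - η < ‖T x₀‖ →
      ∃ (S : X →L[ℝ] Y) (x₁ : X),
        ‖S‖ = 1 ∧ ‖x₁‖ = 1 ∧ ‖S x₁‖ = 1 ∧ ‖x₁ - x₀‖ < ε ∧ ‖S - T‖ < ε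

/-!
Embed `T : X → Y₁` into `Y` as `x ↦ e⁻¹ (T x, 0)` and apply the BPBp of `(X, Y)`: this gives
`S : X → Y` and `x₁` with `‖S x₁‖ = 1`, and since `S` is close to the embedded `T`, the point
`y₀ = S x₁` has a small `Y₂`-component `b`. Let `g` be a norming functional at `y₀`, `u` the
normalized `Y₁`-component of `y₀`, and `α = g (u, 0)`. For an absolute norm,
`|α| s + |g (0, z)| ≤ N(s, ‖z‖)`, so `Q y = α (e y).1 + g (0, (e y).2) u` is an operator
`Y → Y₁` of norm at most one; it maps `y₀` to `u`, and it is close to the first projection since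
`α ≥ 1 - b`. Then `Q ∘ S` attains its norm at `x₁` and is close to `T`.
-/

namespace IsAbsoluteNorm

variable {N : ℝ → ℝ → ℝ}

lemma apply_zero (hN : IsAbsoluteNorm N) (s : ℝ) : N s 0 = |s| := by
  simpa [hN.one_zero] using hN.smul s 1 0

lemma zero_apply (hN : IsAbsoluteNorm N) (t : ℝ) : N 0 t = |t| := by
  simpa [hN.zero_one] using hN.smul t 0 1

lemma abs_le_left (hN : IsAbsoluteNorm N) (s t : ℝ) : |s| ≤ N s t := by
  have h := hN.triangle s t s (-t)
  rw [add_neg_cancel, hN.apply_zero, hN.abs_eq s (-t), abs_neg, ← hN.abs_eq, ← two_mul,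
    abs_mul, abs_two] at h
  linarith

lemma abs_le_right (hN : IsAbsoluteNorm N) (s t : ℝ) : |t| ≤ N s t := by
  have h := hN.triangle s t (-s) t
  rw [add_neg_cancel, hN.zero_apply, hN.abs_eq (-s) t, abs_neg, ← hN.abs_eq, ← two_mul,
    abs_mul, abs_two] at h
  linarith

lemma le_abs_add_abs (hN : IsAbsoluteNorm N) (s t : ℝ) : N s t ≤ |s| + |t| := by
  simpa [hN.apply_zero, hN.zero_apply] using hN.triangle s 0 0 t

end IsAbsoluteNorm

section AbsoluteSum

variable {N : ℝ → ℝ → ℝ} {X Y Y₁ Y₂ : Type*}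
  [NormedAddCommGroup X] [NormedSpace ℝ X]
  [NormedAddCommGroup Y] [NormedSpace ℝ Y]
  [NormedAddCommGroup Y₁] [NormedSpace ℝ Y₁]
  [NormedAddCommGroup Y₂] [NormedSpace ℝ Y₂]
  {e : Y ≃L[ℝ] Y₁ × Y₂}

variable (N e) in
/-- `e` identifies `Y` isometrically with the absolute sum `Y₁ ⊕_N Y₂`. -/
def IsAbsoluteSum : Prop :=
  ∀ y : Y, ‖y‖ = N ‖(e y).1‖ ‖(e y).2‖

variable (e) in
def absoluteSumInl : Y₁ →L[ℝ] Y :=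
  (e.symm : Y₁ × Y₂ →L[ℝ] Y).comp (ContinuousLinearMap.inl ℝ Y₁ Y₂)

@[simp]
lemma apply_absoluteSumInl (y₁ : Y₁) : e (absoluteSumInl e y₁) = (y₁, 0) := by
  simp [absoluteSumInl]

lemma apply_sub_absoluteSumInl_comp (S : X →L[ℝ] Y) (T : X →L[ℝ] Y₁) (x : X) :
    e ((S - (absoluteSumInl e).comp T) x) = ((e (S x)).1 - T x, (e (S x)).2) := by
  ext <;> simp

variable (e) in
def absoluteSumRetraction (g : Y →L[ℝ] ℝ) (u : Y₁) : Y →L[ℝ] Y₁ :=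
  g (e.symm (u, 0)) • (ContinuousLinearMap.fst ℝ Y₁ Y₂).comp (e : Y →L[ℝ] Y₁ × Y₂) +
    ((g.comp (e.symm : Y₁ × Y₂ →L[ℝ] Y)).comp
      ((ContinuousLinearMap.inr ℝ Y₁ Y₂).comp
        ((ContinuousLinearMap.snd ℝ Y₁ Y₂).comp (e : Y →L[ℝ] Y₁ × Y₂)))).smulRight u

lemma absoluteSumRetraction_apply (g : Y →L[ℝ] ℝ) (u : Y₁) (y : Y) :
    absoluteSumRetraction e g u y = g (e.symm (u, 0)) • (e y).1 + g (e.symm (0, (e y).2)) • u :=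
  rfl

lemma apply_eq_of_fst_eq_smul (g : Y →L[ℝ] ℝ) {u : Y₁} {y : Y} {a : ℝ}
    (hy : (e y).1 = a • u) : g y = a * g (e.symm (u, 0)) + g (e.symm (0, (e y).2)) := by
  conv_lhs => rw [← e.symm_apply_apply y, ← Prod.mk.eta (p := e y), hy,
    show (a • u, (e y).2) = a • (u, 0) + (0, (e y).2) by simp]
  rw [map_add, map_add, map_smul, map_smul, smul_eq_mul]

lemma absoluteSumRetraction_apply_of_fst_eq_smul (g : Y →L[ℝ] ℝ) {u : Y₁} {y : Y} {a : ℝ}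
    (hy : (e y).1 = a • u) : absoluteSumRetraction e g u y = g y • u := by
  rw [absoluteSumRetraction_apply, apply_eq_of_fst_eq_smul g hy, hy, smul_smul, ← add_smul,
    mul_comm]

namespace IsAbsoluteSum

lemma norm_symm_apply (he : IsAbsoluteSum N e) (p : Y₁ × Y₂) :
    ‖e.symm p‖ = N ‖p.1‖ ‖p.2‖ := by
  rw [he (e.symm p), e.apply_symm_apply]

lemma norm_fst_le (he : IsAbsoluteSum N e) (hN : IsAbsoluteNorm N) (y : Y) :
    ‖(e y).1‖ ≤ ‖y‖ := by
  simpa [he y] using hN.abs_le_left ‖(e y).1‖ ‖(e y).2‖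

lemma norm_snd_le (he : IsAbsoluteSum N e) (hN : IsAbsoluteNorm N) (y : Y) :
    ‖(e y).2‖ ≤ ‖y‖ := by
  simpa [he y] using hN.abs_le_right ‖(e y).1‖ ‖(e y).2‖

lemma norm_absoluteSumInl_apply (he : IsAbsoluteSum N e) (hN : IsAbsoluteNorm N) (y₁ : Y₁) :
    ‖absoluteSumInl e y₁‖ = ‖y₁‖ := by
  simp [he (absoluteSumInl e y₁), hN.apply_zero]

lemma norm_absoluteSumInl_comp (he : IsAbsoluteSum N e) (hN : IsAbsoluteNorm N)
    (T : X →L[ℝ] Y₁) : ‖(absoluteSumInl e).comp T‖ = ‖T‖ :=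
  ((absoluteSumInl e).comp T).opNorm_ext T fun x => he.norm_absoluteSumInl_apply hN (T x)

lemma norm_fst_apply_sub_le (he : IsAbsoluteSum N e) (hN : IsAbsoluteNorm N)
    (S : X →L[ℝ] Y) (T : X →L[ℝ] Y₁) (x : X) :
    ‖(e (S x)).1 - T x‖ ≤ ‖S - (absoluteSumInl e).comp T‖ * ‖x‖ := by
  have h := (he.norm_fst_le hN _).trans ((S - (absoluteSumInl e).comp T).le_opNorm x)
  rwa [apply_sub_absoluteSumInl_comp] at h

lemma norm_snd_apply_le (he : IsAbsoluteSum N e) (hN : IsAbsoluteNorm N)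
    (S : X →L[ℝ] Y) (T : X →L[ℝ] Y₁) (x : X) :
    ‖(e (S x)).2‖ ≤ ‖S - (absoluteSumInl e).comp T‖ * ‖x‖ := by
  have h := (he.norm_snd_le hN _).trans ((S - (absoluteSumInl e).comp T).le_opNorm x)
  rwa [apply_sub_absoluteSumInl_comp] at h

lemma abs_apply_symm_inl_le (he : IsAbsoluteSum N e) (hN : IsAbsoluteNorm N)
    {g : Y →L[ℝ] ℝ} (hg : ‖g‖ ≤ 1) (y₁ : Y₁) : |g (e.symm (y₁, 0))| ≤ ‖y₁‖ := by
  simpa [he.norm_symm_apply, hN.apply_zero] using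
    (g.le_opNorm _).trans (mul_le_of_le_one_left (norm_nonneg (e.symm (y₁, 0))) hg)

lemma abs_apply_symm_inr_le (he : IsAbsoluteSum N e) (hN : IsAbsoluteNorm N)
    {g : Y →L[ℝ] ℝ} (hg : ‖g‖ ≤ 1) (z : Y₂) : |g (e.symm (0, z))| ≤ ‖z‖ := by
  simpa [he.norm_symm_apply, hN.zero_apply] using
    (g.le_opNorm _).trans (mul_le_of_le_one_left (norm_nonneg (e.symm (0, z))) hg)

lemma abs_add_abs_apply_symm_le (he : IsAbsoluteSum N e) (g : Y →L[ℝ] ℝ) (y₁ : Y₁) (z : Y₂) :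
    |g (e.symm (y₁, 0))| + |g (e.symm (0, z))| ≤ ‖g‖ * N ‖y₁‖ ‖z‖ := by
  -- `(y₁, z)` and `(y₁, -z)` both have norm `N ‖y₁‖ ‖z‖`
  have bound : ∀ z' : Y₂, ‖z'‖ = ‖z‖ →
      |g (e.symm (y₁, 0)) + g (e.symm (0, z'))| ≤ ‖g‖ * N ‖y₁‖ ‖z‖ := fun z' hz' => by
    rw [← map_add, ← map_add, Prod.mk_add_mk, add_zero, zero_add]
    simpa [he.norm_symm_apply, hz'] using g.le_opNorm (e.symm (y₁, z'))
  have hplus := abs_le.mp (bound z rfl)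
  have hminus := abs_le.mp (bound (-z) (norm_neg z))
  rw [show ((0 : Y₁), -z) = -(0, z) by simp, map_neg, map_neg] at hminus
  rcases abs_cases (g (e.symm (y₁, 0))) with ⟨h₁, -⟩ | ⟨h₁, -⟩ <;>
    rcases abs_cases (g (e.symm (0, z))) with ⟨h₂, -⟩ | ⟨h₂, -⟩ <;>
    · rw [h₁, h₂]; linarith [hplus.1, hplus.2, hminus.1, hminus.2]

lemma norm_absoluteSumRetraction_le (he : IsAbsoluteSum N e) {g : Y →L[ℝ] ℝ} (hg : ‖g‖ ≤ 1)
    {u : Y₁} (hu : ‖u‖ = 1) : ‖absoluteSumRetraction e g u‖ ≤ 1 := by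
  refine (absoluteSumRetraction e g u).opNorm_le_bound zero_le_one fun y => ?_
  have h := he.abs_add_abs_apply_symm_le g (‖(e y).1‖ • u) (e y).2
  rw [show (‖(e y).1‖ • u, (0 : Y₂)) = ‖(e y).1‖ • (u, 0) by simp, map_smul, map_smul,
    smul_eq_mul, abs_mul, abs_norm, norm_smul, hu, mul_one, norm_norm, ← he] at h
  calc ‖absoluteSumRetraction e g u y‖
      ≤ ‖(e y).1‖ * |g (e.symm (u, 0))| + |g (e.symm (0, (e y).2))| := by
        rw [absoluteSumRetraction_apply]
        refine (norm_add_le _ _).trans_eq ?_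
        rw [norm_smul, norm_smul, hu, mul_one, Real.norm_eq_abs, Real.norm_eq_abs, mul_comm]
    _ ≤ ‖g‖ * ‖y‖ := h
    _ ≤ 1 * ‖y‖ := by gcongr

lemma norm_absoluteSumRetraction_sub_fst_le (he : IsAbsoluteSum N e) (hN : IsAbsoluteNorm N)
    {g : Y →L[ℝ] ℝ} (hg : ‖g‖ ≤ 1) {u : Y₁} (hu : ‖u‖ = 1) (y : Y) :
    ‖absoluteSumRetraction e g u y - (e y).1‖ ≤ (1 - g (e.symm (u, 0))) * ‖y‖ + ‖(e y).2‖ := by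
  have hα : g (e.symm (u, 0)) ≤ 1 :=
    (le_abs_self _).trans (hu ▸ he.abs_apply_symm_inl_le hN hg u)
  calc ‖absoluteSumRetraction e g u y - (e y).1‖
      = ‖(g (e.symm (u, 0)) - 1) • (e y).1 + g (e.symm (0, (e y).2)) • u‖ := by
        rw [absoluteSumRetraction_apply, sub_smul, one_smul]; abel_nf
    _ ≤ (1 - g (e.symm (u, 0))) * ‖(e y).1‖ + |g (e.symm (0, (e y).2))| := by
        refine (norm_add_le _ _).trans_eq ?_
        rw [norm_smul, norm_smul, hu, mul_one, Real.norm_eq_abs, Real.norm_eq_abs,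
          abs_of_nonpos (by linarith), neg_sub]
    _ ≤ (1 - g (e.symm (u, 0))) * ‖y‖ + ‖(e y).2‖ := by
        gcongr
        · exact he.norm_fst_le hN y
        · exact he.abs_apply_symm_inr_le hN hg _

lemma exists_retraction_norming (he : IsAbsoluteSum N e) (hN : IsAbsoluteNorm N) {y₀ : Y}
    (hy₀ : ‖y₀‖ = 1) (hb : ‖(e y₀).2‖ < 1) :
    ∃ Q : Y →L[ℝ] Y₁, ‖Q‖ ≤ 1 ∧ ‖Q y₀‖ = 1 ∧
      ∀ y, ‖Q y - (e y).1‖ ≤ ‖(e y₀).2‖ * ‖y‖ + ‖(e y).2‖ := by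
  set a := ‖(e y₀).1‖
  set b := ‖(e y₀).2‖
  have hab : 1 ≤ a + b := by
    have h := hN.le_abs_add_abs a b
    rwa [abs_of_nonneg (norm_nonneg _), abs_of_nonneg (norm_nonneg _), ← he, hy₀] at h
  have ha : 0 < a := by linarith
  have ha1 : a ≤ 1 := hy₀ ▸ he.norm_fst_le hN y₀
  obtain ⟨g, hg, hgy₀⟩ := exists_dual_vector ℝ y₀ (by simp [hy₀])
  simp only [hy₀, RCLike.ofReal_one] at hgy₀
  set u := a⁻¹ • (e y₀).1
  have hu : ‖u‖ = 1 := by rw [norm_smul, norm_inv, norm_norm, inv_mul_cancel₀ ha.ne']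
  have hy₀u : (e y₀).1 = a • u := by simp [u, smul_smul, ha.ne']
  have hα : 1 - b ≤ g (e.symm (u, 0)) := by
    have hsplit := apply_eq_of_fst_eq_smul g hy₀u
    have hsnd := le_of_abs_le (he.abs_apply_symm_inr_le hN hg.le (e y₀).2)
    have hpos : 0 < a * g (e.symm (u, 0)) := by linarith
    linarith [mul_le_of_le_one_left (pos_of_mul_pos_right hpos ha.le).le ha1]
  refine ⟨absoluteSumRetraction e g u, he.norm_absoluteSumRetraction_le hg.le hu, ?_, fun y => ?_⟩
  · rw [absoluteSumRetraction_apply_of_fst_eq_smul g hy₀u, hgy₀, one_smul, hu]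
  · refine (he.norm_absoluteSumRetraction_sub_fst_le hN hg.le hu y).trans ?_
    gcongr
    linarith

lemma norm_comp_sub_le_three_mul (he : IsAbsoluteSum N e) (hN : IsAbsoluteNorm N)
    {Q : Y →L[ℝ] Y₁} {b : ℝ} (hQ : ∀ y, ‖Q y - (e y).1‖ ≤ b * ‖y‖ + ‖(e y).2‖)
    {S : X →L[ℝ] Y} (hS : ‖S‖ ≤ 1) {T : X →L[ℝ] Y₁}
    (hb : b ≤ ‖S - (absoluteSumInl e).comp T‖) :
    ‖Q.comp S - T‖ ≤ 3 * ‖S - (absoluteSumInl e).comp T‖ := by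
  refine (Q.comp S - T).opNorm_le_bound (by positivity) fun x => ?_
  have hSx : ‖S x‖ ≤ ‖x‖ := (S.le_opNorm x).trans (mul_le_of_le_one_left (norm_nonneg x) hS)
  have hbSx : b * ‖S x‖ ≤ ‖S - (absoluteSumInl e).comp T‖ * ‖x‖ :=
    mul_le_mul hb hSx (norm_nonneg _) (norm_nonneg _)
  have h := norm_sub_le_norm_sub_add_norm_sub (Q (S x)) (e (S x)).1 (T x)
  rw [sub_apply, ContinuousLinearMap.comp_apply]
  linarith [hQ (S x), he.norm_fst_apply_sub_le hN S T x, he.norm_snd_apply_le hN S T x]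

end IsAbsoluteSum

end AbsoluteSum

theorem bpbp_absolute_summand_range_general (X Y Y₁ Y₂ : Type*)
    [NormedAddCommGroup X] [NormedSpace ℝ X]
    [NormedAddCommGroup Y] [NormedSpace ℝ Y]
    [NormedAddCommGroup Y₁] [NormedSpace ℝ Y₁]
    [NormedAddCommGroup Y₂] [NormedSpace ℝ Y₂]
    (N : ℝ → ℝ → ℝ) (hN : IsAbsoluteNorm N)
    (e : Y ≃L[ℝ] Y₁ × Y₂) (he : ∀ y : Y, ‖y‖ = N ‖(e y).1‖ ‖(e y).2‖)
    (h : HasBPBp X Y) : HasBPBp X Y₁ := by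
  have he : IsAbsoluteSum N e := he
  intro ε hε
  obtain ⟨η, hη, hBP⟩ := h (min (ε / 3) 1) (by positivity)
  have hε₃ := min_le_left (ε / 3) 1
  have hε₁ := min_le_right (ε / 3) 1
  refine ⟨η, hη, fun T x₀ hT hx₀ hTx₀ => ?_⟩
  obtain ⟨S, x₁, hS, hx₁, hSx₁, hx₁x₀, hST⟩ :=
    hBP ((absoluteSumInl e).comp T) x₀ (by rw [he.norm_absoluteSumInl_comp hN, hT]) hx₀
      (by rwa [ContinuousLinearMap.comp_apply, he.norm_absoluteSumInl_apply hN])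
  have hb : ‖(e (S x₁)).2‖ ≤ ‖S - (absoluteSumInl e).comp T‖ := by
    simpa [hx₁] using he.norm_snd_apply_le hN S T x₁
  obtain ⟨Q, hQ, hQSx₁, hQS⟩ := he.exists_retraction_norming hN hSx₁ (by linarith)
  have hQS_norm : ‖Q.comp S‖ = 1 := by
    refine le_antisymm ((Q.opNorm_comp_le S).trans (mul_le_one₀ hQ (norm_nonneg S) hS.le)) ?_
    simpa [hQSx₁, hx₁] using (Q.comp S).le_opNorm x₁
  refine ⟨Q.comp S, x₁, hQS_norm, hx₁, hQSx₁, hx₁x₀.trans_le (by linarith), ?_⟩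
  linarith [he.norm_comp_sub_le_three_mul hN hQS hS.le hb]

theorem bpbp_absolute_summand_range (X Y Y₁ Y₂ : Type*)
    [NormedAddCommGroup X] [NormedSpace ℝ X] [CompleteSpace X]
    [NormedAddCommGroup Y] [NormedSpace ℝ Y] [CompleteSpace Y]
    [NormedAddCommGroup Y₁] [NormedSpace ℝ Y₁] [CompleteSpace Y₁]
    [NormedAddCommGroup Y₂] [NormedSpace ℝ Y₂] [CompleteSpace Y₂]
    (N : ℝ → ℝ → ℝ) (hN : IsAbsoluteNorm N)
    (e : Y ≃L[ℝ] Y₁ × Y₂) (he : ∀ y : Y, ‖y‖ = N ‖(e y).1‖ ‖(e y).2‖)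
    (h : HasBPBp X Y) : HasBPBp X Y₁ :=
  bpbp_absolute_summand_range_general X Y Y₁ Y₂ N hN e he h
end

section
/- Let W and Z be real Banach spaces, let N be an absolute norm, and let W ⊕_a Z be the corresponding absolute sum. For T a bounded linear operator on W, define the bounded linear operator T̃ on W ⊕_a Z by T̃(w,z) = (Tw, 0). Then v(T̃) = v(T) and ‖T̃‖ = ‖T‖, where v denotes the numerical radius. -/
/-!
Write `ι w = (w, 0)` and `π (w, z) = w`. Since `N(s, 0) = |s|` and `N` is monotone in each
argument on `[0, ∞)`, `ι` is an isometry and `π` a contraction, and `T̃ = ι ∘ T ∘ π`. This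
already gives `‖T̃‖ = ‖T‖`, and `v(T) ≤ v(T̃)` by sending `(w, g) ∈ Π(W)` to `(ι w, g ∘ π)`.

Conversely, let `(x, f) ∈ Π(X)` with `x = (w, z)`, and split `f` into `g = f ∘ ι` and its
restriction `k` to `Z`. Then `g w + k z = 1`, while monotonicity of `N` gives
`g w' + k z' ≤ 1` whenever `‖w'‖ ≤ ‖w‖` and `‖z'‖ ≤ ‖z‖`, so `‖g‖‖w‖ + ‖k‖‖z‖ ≤ 1`.
Hence `g w = ‖g‖‖w‖ ≤ 1`, and normalising `g` and `w` shows
`|f (T̃ x)| = |g (T w)| ≤ ‖g‖‖w‖ v(T) ≤ v(T)`.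
-/

open Filter Topology

/-- The numerical radius of a bounded linear operator on `X`:
`v(T) = sup {|x*(T x)| : ‖x‖ = ‖x*‖ = 1, x*(x) = 1}`. -/
noncomputable def NumRadius {X : Type*} [NormedAddCommGroup X] [NormedSpace ℝ X]
    (T : X →L[ℝ] X) : ℝ :=
  sSup {r : ℝ | ∃ (x : X) (f : X →L[ℝ] ℝ),
    ‖x‖ = 1 ∧ ‖f‖ = 1 ∧ f x = 1 ∧ r = |f (T x)|}

open Set

namespace IsAbsoluteNorm

variable {N : ℝ → ℝ → ℝ}

theorem swap (hN : IsAbsoluteNorm N) : IsAbsoluteNorm fun s t => N t s where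
  nonneg s t := hN.nonneg t s
  eq_zero_iff s t := (hN.eq_zero_iff t s).trans and_comm
  triangle s₁ t₁ s₂ t₂ := hN.triangle t₁ s₁ t₂ s₂
  smul c s t := hN.smul c t s
  one_zero := hN.zero_one
  zero_one := hN.one_zero
  abs_eq s t := hN.abs_eq t s

theorem neg_left (hN : IsAbsoluteNorm N) (s t : ℝ) : N (-s) t = N s t := by
  rw [hN.abs_eq, abs_neg, ← hN.abs_eq]

theorem apply_zero_right (hN : IsAbsoluteNorm N) {s : ℝ} (hs : 0 ≤ s) : N s 0 = s := by
  simpa [hN.one_zero, abs_of_nonneg hs] using hN.smul s 1 0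

theorem convexOn_left (hN : IsAbsoluteNorm N) (t : ℝ) : ConvexOn ℝ univ fun s => N s t := by
  refine ⟨convex_univ, fun u _ v _ a b ha hb hab => ?_⟩
  calc N (a • u + b • v) t = N (a * u + b * v) (a * t + b * t) := by
        rw [← add_mul, hab, one_mul, smul_eq_mul, smul_eq_mul]
    _ ≤ N (a * u) (a * t) + N (b * v) (b * t) := hN.triangle _ _ _ _
    _ = a • N u t + b • N v t := by
        rw [hN.smul, hN.smul, abs_of_nonneg ha, abs_of_nonneg hb, smul_eq_mul, smul_eq_mul]

theorem mono_left (hN : IsAbsoluteNorm N) {s s' : ℝ} (t : ℝ) (hs' : 0 ≤ s') (hs : s' ≤ s) :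
    N s' t ≤ N s t := by
  have hmem : s' ∈ segment ℝ (-s) s := by
    rw [segment_eq_Icc (by linarith)]
    exact ⟨by linarith, hs⟩
  calc N s' t ≤ max (N (-s) t) (N s t) :=
        (hN.convexOn_left t).le_on_segment (mem_univ _) (mem_univ _) hmem
    _ = N s t := by rw [hN.neg_left, max_self]

theorem mono (hN : IsAbsoluteNorm N) {s s' t t' : ℝ}
    (hs' : 0 ≤ s') (hs : s' ≤ s) (ht' : 0 ≤ t') (ht : t' ≤ t) : N s' t' ≤ N s t :=
  (hN.swap.mono_left s' ht' ht).trans (hN.mono_left t hs' hs)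

end IsAbsoluteNorm

theorem ContinuousLinearMap.opNorm_mul_le_of_forall_apply_le {E : Type*}
    [NormedAddCommGroup E] [NormedSpace ℝ E] (g : E →L[ℝ] ℝ) {r c : ℝ} (hr : 0 ≤ r)
    (h : ∀ v, ‖v‖ ≤ r → g v ≤ c) : ‖g‖ * r ≤ c := by
  have hc : 0 ≤ c := by simpa using h 0 (by simpa using hr)
  rcases hr.eq_or_lt with rfl | hr
  · simpa using hc
  refine (le_div_iff₀ hr).mp (g.opNorm_le_of_unit_norm (div_nonneg hc hr.le) fun u hu => ?_)
  have hru : ‖r • u‖ ≤ r := by rw [norm_smul, hu, Real.norm_of_nonneg hr.le, mul_one]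
  have hgu : |g (r • u)| ≤ c :=
    abs_le.mpr ⟨neg_le.mp (by simpa using h (-(r • u)) (by rwa [norm_neg])), h _ hru⟩
  rw [map_smul, smul_eq_mul, abs_mul, abs_of_pos hr] at hgu
  rwa [le_div_iff₀ hr, Real.norm_eq_abs, mul_comm]

section NumRadius

variable {X : Type*} [NormedAddCommGroup X] [NormedSpace ℝ X]

theorem le_numRadius (T : X →L[ℝ] X) {x : X} {f : X →L[ℝ] ℝ}
    (hx : ‖x‖ = 1) (hf : ‖f‖ = 1) (hfx : f x = 1) : |f (T x)| ≤ NumRadius T := by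
  refine le_csSup ⟨‖T‖, ?_⟩ ⟨x, f, hx, hf, hfx, rfl⟩
  rintro r ⟨y, g, hy, hg, -, rfl⟩
  calc |g (T y)| = ‖g (T y)‖ := (Real.norm_eq_abs _).symm
    _ ≤ ‖g‖ * (‖T‖ * ‖y‖) := g.le_opNorm_of_le (T.le_opNorm y)
    _ = ‖T‖ := by rw [hg, hy, one_mul, mul_one]

theorem numRadius_le (T : X →L[ℝ] X) {c : ℝ} (hc : 0 ≤ c)
    (h : ∀ (x : X) (f : X →L[ℝ] ℝ), ‖x‖ = 1 → ‖f‖ = 1 → f x = 1 → |f (T x)| ≤ c) :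
    NumRadius T ≤ c :=
  Real.sSup_le (by rintro r ⟨x, f, hx, hf, hfx, rfl⟩; exact h x f hx hf hfx) hc

theorem numRadius_nonneg (T : X →L[ℝ] X) : 0 ≤ NumRadius T :=
  Real.sSup_nonneg (by rintro r ⟨x, f, -, -, -, rfl⟩; positivity)

theorem abs_apply_le_mul_numRadius (T : X →L[ℝ] X) {g : X →L[ℝ] ℝ} {w : X}
    (hgw : g w = ‖g‖ * ‖w‖) : |g (T w)| ≤ ‖g‖ * ‖w‖ * NumRadius T := by
  rcases eq_or_ne g 0 with rfl | hg
  · simp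
  rcases eq_or_ne w 0 with rfl | hw
  · simp
  have hgw_pos : 0 < ‖g‖ * ‖w‖ := mul_pos (norm_pos_iff.mpr hg) (norm_pos_iff.mpr hw)
  have hunit : (‖g‖⁻¹ • g) (‖w‖⁻¹ • w) = 1 := by
    rw [smul_apply, map_smul, hgw, smul_eq_mul, smul_eq_mul]
    field_simp
  have h := le_numRadius T (x := ‖w‖⁻¹ • w) (f := ‖g‖⁻¹ • g)
    (by simpa using norm_smul_inv_norm (𝕜 := ℝ) hw)
    (by simpa using norm_smul_inv_norm (𝕜 := ℝ) hg) hunit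
  rwa [smul_apply, map_smul, map_smul, smul_eq_mul, smul_eq_mul, ← mul_assoc,
    ← mul_inv, abs_mul, abs_inv, abs_of_pos hgw_pos, inv_mul_le_iff₀ hgw_pos] at h

variable {W : Type*} [NormedAddCommGroup W] [NormedSpace ℝ W]
  {ι : W →L[ℝ] X} {π : X →L[ℝ] W}

theorem opNorm_comp_comp_eq_of_retract (hι : ‖ι‖ ≤ 1) (hπ : ‖π‖ ≤ 1)
    (hπι : Function.LeftInverse π ι) (T : W →L[ℝ] W) : ‖ι.comp (T.comp π)‖ = ‖T‖ := by
  apply le_antisymm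
  · calc ‖ι.comp (T.comp π)‖ ≤ ‖ι‖ * (‖T‖ * ‖π‖) := by
          grw [ι.opNorm_comp_le, T.opNorm_comp_le]
      _ ≤ 1 * (‖T‖ * 1) := by gcongr
      _ = ‖T‖ := by ring
  · have hT : T = π.comp ((ι.comp (T.comp π)).comp ι) := by
      ext w
      simp [hπι _]
    calc ‖T‖ = ‖π.comp ((ι.comp (T.comp π)).comp ι)‖ := by rw [← hT]
      _ ≤ ‖π‖ * (‖ι.comp (T.comp π)‖ * ‖ι‖) := by
          grw [π.opNorm_comp_le, ContinuousLinearMap.opNorm_comp_le]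
      _ ≤ 1 * (‖ι.comp (T.comp π)‖ * 1) := by gcongr
      _ = ‖ι.comp (T.comp π)‖ := by ring

theorem numRadius_le_numRadius_comp_comp_of_retract (hι : ‖ι‖ ≤ 1) (hπ : ‖π‖ ≤ 1)
    (hπι : Function.LeftInverse π ι) (T : W →L[ℝ] W) :
    NumRadius T ≤ NumRadius (ι.comp (T.comp π)) := by
  refine numRadius_le T (numRadius_nonneg _) fun w g hw hg hgw => ?_
  have hιw : ‖ι w‖ = 1 := by
    refine le_antisymm (by simpa [hw] using ι.le_of_opNorm_le hι w) ?_
    simpa [hπι _, hw] using π.le_of_opNorm_le hπ (ι w)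
  have hgπ : ‖g.comp π‖ = 1 := by
    refine le_antisymm ?_ ?_
    · calc ‖g.comp π‖ ≤ ‖g‖ * ‖π‖ := g.opNorm_comp_le π
        _ ≤ 1 := by rw [hg, one_mul]; exact hπ
    · simpa [hπι _, hgw, hιw] using (g.comp π).le_opNorm (ι w)
  simpa [hπι _] using le_numRadius (ι.comp (T.comp π)) hιw hgπ (by simp [hπι _, hgw])

end NumRadius

section AbsoluteSum

variable {W Z X : Type*} [NormedAddCommGroup W] [NormedSpace ℝ W]
  [NormedAddCommGroup Z] [NormedSpace ℝ Z] [NormedAddCommGroup X] [NormedSpace ℝ X]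
  {N : ℝ → ℝ → ℝ} {e : X ≃L[ℝ] W × Z}

theorem opNorm_symm_comp_inl_le (hN : IsAbsoluteNorm N)
    (he : ∀ x : X, ‖x‖ = N ‖(e x).1‖ ‖(e x).2‖) :
    ‖(e.symm : W × Z →L[ℝ] X).comp (.inl ℝ W Z)‖ ≤ 1 :=
  ContinuousLinearMap.opNorm_le_bound _ zero_le_one fun w => by
    simp [he, hN.apply_zero_right (norm_nonneg w)]

theorem opNorm_fst_comp_le (hN : IsAbsoluteNorm N)
    (he : ∀ x : X, ‖x‖ = N ‖(e x).1‖ ‖(e x).2‖) :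
    ‖(ContinuousLinearMap.fst ℝ W Z).comp (e : X →L[ℝ] W × Z)‖ ≤ 1 :=
  ContinuousLinearMap.opNorm_le_bound _ zero_le_one fun x => by
    calc ‖(e x).1‖ = N ‖(e x).1‖ 0 := (hN.apply_zero_right (norm_nonneg _)).symm
      _ ≤ N ‖(e x).1‖ ‖(e x).2‖ := hN.swap.mono_left _ le_rfl (norm_nonneg _)
      _ = 1 * ‖x‖ := by rw [he x, one_mul]

theorem apply_fst_eq_norm_mul_norm_of_norming (hN : IsAbsoluteNorm N)
    (he : ∀ x : X, ‖x‖ = N ‖(e x).1‖ ‖(e x).2‖) {x : X} {f : X →L[ℝ] ℝ}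
    (hf : ‖f‖ ≤ 1) (hfx : f x = ‖x‖) {g : W →L[ℝ] ℝ} (hg : ∀ w, g w = f (e.symm (w, 0))) :
    g (e x).1 = ‖g‖ * ‖(e x).1‖ ∧ ‖g‖ * ‖(e x).1‖ ≤ ‖x‖ := by
  set w := (e x).1
  set z := (e x).2
  let k : Z →L[ℝ] ℝ := f.comp ((e.symm : W × Z →L[ℝ] X).comp (.inr ℝ W Z))
  have hsplit (w' : W) (z' : Z) : f (e.symm (w', z')) = g w' + k z' := by
    rw [hg]
    change _ = f (e.symm (w', 0)) + f (e.symm (0, z'))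
    rw [← map_add, ← map_add, Prod.mk_add_mk, add_zero, zero_add]
  have hsum : g w + k z = ‖x‖ := by
    rw [← hsplit, ← hfx]
    simp [w, z]
  have hbound (w' : W) (z' : Z) (hw' : ‖w'‖ ≤ ‖w‖) (hz' : ‖z'‖ ≤ ‖z‖) : g w' + k z' ≤ ‖x‖ :=
    calc g w' + k z' = f (e.symm (w', z')) := (hsplit w' z').symm
      _ ≤ ‖f‖ * ‖e.symm (w', z')‖ := (le_abs_self _).trans (f.le_opNorm _)
      _ ≤ N ‖w'‖ ‖z'‖ := by
          rw [he, ContinuousLinearEquiv.apply_symm_apply]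
          exact mul_le_of_le_one_left (hN.nonneg _ _) hf
      _ ≤ N ‖w‖ ‖z‖ := hN.mono (norm_nonneg _) hw' (norm_nonneg _) hz'
      _ = ‖x‖ := (he x).symm
  have hnorms : ‖g‖ * ‖w‖ + ‖k‖ * ‖z‖ ≤ ‖x‖ := by
    have hg_le (z' : Z) (hz' : ‖z'‖ ≤ ‖z‖) : ‖g‖ * ‖w‖ ≤ ‖x‖ - k z' :=
      g.opNorm_mul_le_of_forall_apply_le (norm_nonneg w) fun w' hw' =>
        le_sub_iff_add_le.mpr (hbound w' z' hw' hz')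
    have := k.opNorm_mul_le_of_forall_apply_le (norm_nonneg z) fun z' hz' =>
      le_sub_comm.mp (hg_le z' hz')
    linarith
  have hgw : g w ≤ ‖g‖ * ‖w‖ := (le_abs_self _).trans (g.le_opNorm w)
  have hkz : k z ≤ ‖k‖ * ‖z‖ := (le_abs_self _).trans (k.le_opNorm z)
  have hkz_nonneg : 0 ≤ ‖k‖ * ‖z‖ := by positivity
  constructor <;> linarith

theorem numRadius_symm_comp_inl_comp_le (hN : IsAbsoluteNorm N)
    (he : ∀ x : X, ‖x‖ = N ‖(e x).1‖ ‖(e x).2‖) (T : W →L[ℝ] W) :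
    NumRadius (((e.symm : W × Z →L[ℝ] X).comp (.inl ℝ W Z)).comp
      (T.comp ((ContinuousLinearMap.fst ℝ W Z).comp (e : X →L[ℝ] W × Z)))) ≤ NumRadius T := by
  refine numRadius_le _ (numRadius_nonneg T) fun x f hx hf hfx => ?_
  let g : W →L[ℝ] ℝ := f.comp ((e.symm : W × Z →L[ℝ] X).comp (.inl ℝ W Z))
  obtain ⟨hgw, hgw_le⟩ :=
    apply_fst_eq_norm_mul_norm_of_norming hN he hf.le (hfx.trans hx.symm) (g := g) fun _ => rfl
  calc |g (T (e x).1)| ≤ ‖g‖ * ‖(e x).1‖ * NumRadius T := abs_apply_le_mul_numRadius T hgw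
    _ ≤ NumRadius T := mul_le_of_le_one_left (numRadius_nonneg T) (hx ▸ hgw_le)

end AbsoluteSum

theorem numRadius_and_norm_of_extension_general (W Z X : Type*)
    [NormedAddCommGroup W] [NormedSpace ℝ W]
    [NormedAddCommGroup Z] [NormedSpace ℝ Z]
    [NormedAddCommGroup X] [NormedSpace ℝ X]
    (N : ℝ → ℝ → ℝ) (hN : IsAbsoluteNorm N)
    (e : X ≃L[ℝ] W × Z) (he : ∀ x : X, ‖x‖ = N ‖(e x).1‖ ‖(e x).2‖)
    (T : W →L[ℝ] W) :
    NumRadius ((e.symm : W × Z →L[ℝ] X).comp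
        ((((T.comp (ContinuousLinearMap.fst ℝ W Z)).prod (0 : W × Z →L[ℝ] Z))).comp
          (e : X →L[ℝ] W × Z))) = NumRadius T ∧
    ‖(e.symm : W × Z →L[ℝ] X).comp
        ((((T.comp (ContinuousLinearMap.fst ℝ W Z)).prod (0 : W × Z →L[ℝ] Z))).comp
          (e : X →L[ℝ] W × Z))‖ = ‖T‖ := by
  set ι := (e.symm : W × Z →L[ℝ] X).comp (.inl ℝ W Z)
  set π := (ContinuousLinearMap.fst ℝ W Z).comp (e : X →L[ℝ] W × Z)
  have hπι : Function.LeftInverse π ι := fun w => by simp [ι, π]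
  have hι := opNorm_symm_comp_inl_le hN he
  have hπ := opNorm_fst_comp_le hN he
  change NumRadius (ι.comp (T.comp π)) = _ ∧ ‖ι.comp (T.comp π)‖ = _
  exact ⟨(numRadius_symm_comp_inl_comp_le hN he T).antisymm
      (numRadius_le_numRadius_comp_comp_of_retract hι hπ hπι T),
    opNorm_comp_comp_eq_of_retract hι hπ hπι T⟩

theorem numRadius_and_norm_of_extension (W Z X : Type*)
    [NormedAddCommGroup W] [NormedSpace ℝ W] [CompleteSpace W]
    [NormedAddCommGroup Z] [NormedSpace ℝ Z] [CompleteSpace Z]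
    [NormedAddCommGroup X] [NormedSpace ℝ X] [CompleteSpace X]
    (N : ℝ → ℝ → ℝ) (hN : IsAbsoluteNorm N)
    (e : X ≃L[ℝ] W × Z) (he : ∀ x : X, ‖x‖ = N ‖(e x).1‖ ‖(e x).2‖)
    (T : W →L[ℝ] W) :
    NumRadius ((e.symm : W × Z →L[ℝ] X).comp
        ((((T.comp (ContinuousLinearMap.fst ℝ W Z)).prod (0 : W × Z →L[ℝ] Z))).comp
          (e : X →L[ℝ] W × Z))) = NumRadius T ∧
    ‖(e.symm : W × Z →L[ℝ] X).comp
        ((((T.comp (ContinuousLinearMap.fst ℝ W Z)).prod (0 : W × Z →L[ℝ] Z))).comp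
          (e : X →L[ℝ] W × Z))‖ = ‖T‖ :=
  numRadius_and_norm_of_extension_general W Z X N hN e he T
end
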